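/- Let H be a separable complex Hilbert space with an orthonormal (Hilbert) basis (e_n)_{n∈ℤ} indexed by the integers. Then the set {ξ ∈ H : for every p > 0, Σ_{n∈ℤ} |n|^p |⟨ξ, e_n⟩|² = ∞} is a dense G_δ subset of H. -/

import Mathlib

open MeasureTheory Filter Topology
open scoped ENNReal InnerProductSpace

noncomputable section

/-- `∫ μ(B(x,ε))^{q-1} dμ(x)` (over `supp μ`, which is `μ`-a.e. all of `ℝ`), in `[0,∞]`. -/
def corrInt (μ : Measure ℝ) (q ε : ℝ) : ℝ≥0∞ :=
  ∫⁻ x, μ (Metric.ball x ε) ^ (q - 1) ∂μ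

/-- Upper `q`-generalized fractal dimension `D_μ^+(q)`. -/
def Dupper (μ : Measure ℝ) (q : ℝ) : ℝ :=
  limsup (fun ε : ℝ => Real.log (corrInt μ q ε).toReal / ((q - 1) * Real.log ε)) (𝓝[>] 0)

/-- Lower `q`-generalized fractal dimension `D_μ^-(q)`. -/
def Dlower (μ : Measure ℝ) (q : ℝ) : ℝ :=
  liminf (fun ε : ℝ => Real.log (corrInt μ q ε).toReal / ((q - 1) * Real.log ε)) (𝓝[>] 0)

/-- `∫_ℝ μ(B(x,ε))^q dx` (Lebesgue), in `[0,∞]`. -/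
def meanInt (μ : Measure ℝ) (q ε : ℝ) : ℝ≥0∞ :=
  ∫⁻ x, μ (Metric.ball x ε) ^ q

/-- Upper mean-`q` dimension `m_μ^+(q)`. -/
def mUpper (μ : Measure ℝ) (q : ℝ) : ℝ :=
  limsup (fun ε : ℝ => Real.log (ε⁻¹ * (meanInt μ q ε).toReal) / ((q - 1) * Real.log ε)) (𝓝[>] 0)

/-- Lower mean-`q` dimension `m_μ^-(q)`. -/
def mLower (μ : Measure ℝ) (q : ℝ) : ℝ :=
  liminf (fun ε : ℝ => Real.log (ε⁻¹ * (meanInt μ q ε).toReal) / ((q - 1) * Real.log ε)) (𝓝[>] 0)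

/-- `C_μ(q,t) = t ∫_{-r-1}^{r+1} (∫_ℝ e^{-t|x-y|} dμ(y))^q dx`. -/
def Cmu (μ : Measure ℝ) (r q t : ℝ) : ℝ :=
  t * ∫ x in Set.Icc (-r - 1) (r + 1), (∫ y, Real.exp (-(t * |x - y|)) ∂μ) ^ q

/-- A real sequence is weakly-spaced. -/
def WeaklySpaced (a : ℕ → ℝ) : Prop :=
  ∀ α : ℝ, 0 < α → ∃ j : ℕ → ℕ, Function.Injective j ∧
    (∀ l : ℕ, 0 < a (j l) - a (j (l + 1))) ∧
    Antitone (fun l : ℕ => a (j l) - a (j (l + 1))) ∧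
    Tendsto (fun l : ℕ => a (j l) - a (j (l + 1))) atTop (𝓝 0) ∧
    ∃ C : ℝ, 0 < C ∧ ∀ l : ℕ, C / ((l : ℝ) + 1) ^ (1 + α) ≤ a (j l) - a (j (l + 1))

variable {H : Type*} [NormedAddCommGroup H] [InnerProductSpace ℂ H] [CompleteSpace H]

/-- The spectral measure `μ_ξ = Σ_j |⟨e_j, ξ⟩|² δ_{λ_j}` of a vector `ξ` with respect to an
orthonormal basis of eigenvectors `e_j` with eigenvalues `lam j`. -/
def ppMeasure (e : HilbertBasis ℕ ℂ H) (lam : ℕ → ℝ) (ξ : H) : Measure ℝ :=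
  Measure.sum fun j => ((‖(⟪e j, ξ⟫_ℂ : ℂ)‖₊ : ℝ≥0∞) ^ 2) • Measure.dirac (lam j)

/-- `f(T)η = Σ_j f(λ_j)⟨e_j, η⟩ e_j` for the operator `T` diagonalized by `e` with
eigenvalues `lam`. -/
def applyF (e : HilbertBasis ℕ ℂ H) (lam : ℕ → ℝ) (f : ℝ → ℝ) (η : H) : H :=
  ∑' j : ℕ, (((f (lam j) : ℂ)) * ⟪e j, η⟫_ℂ) • e j

/-- `e^{-isT}η = Σ_j e^{-isλ_j}⟨e_j, η⟩ e_j`. -/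
def evolvePP (e : HilbertBasis ℕ ℂ H) (lam : ℕ → ℝ) (s : ℝ) (η : H) : H :=
  ∑' j : ℕ, (Complex.exp (-(Complex.I * s * lam j)) * ⟪e j, η⟫_ℂ) • e j

/-- Time-averaged `p`-moment `⟨⟨|X|^p⟩⟩_{t,η}` for the pure point operator diagonalized by `e`,
with respect to the orthonormal basis `B`, valued in `[0,∞]`. -/
def momentPP (e : HilbertBasis ℕ ℂ H) (lam : ℕ → ℝ) (B : HilbertBasis ℤ ℂ H) (p : ℝ)
    (η : H) (t : ℝ) : ℝ≥0∞ :=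
  ENNReal.ofReal t⁻¹ *
    ∫⁻ s in Set.Ioc (0 : ℝ) t,
      ∑' n : ℤ, ENNReal.ofReal (|(n : ℝ)| ^ p) *
        (‖(⟪evolvePP e lam s η, B n⟫_ℂ : ℂ)‖₊ : ℝ≥0∞) ^ 2

/-- Upper transport exponent `α_B^+(η,p)`, valued in `[-∞,∞]`. -/
def alphaPP (e : HilbertBasis ℕ ℂ H) (lam : ℕ → ℝ) (B : HilbertBasis ℤ ℂ H) (p : ℝ)
    (η : H) : EReal :=
  limsup (fun t : ℝ => ENNReal.log (momentPP e lam B p η t) / (Real.log t : EReal)) atTop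

/-- `e^{-isT}ξ` for a bounded operator `T`, via the operator exponential. -/
def evolveOp (T : H →L[ℂ] H) (s : ℝ) (ξ : H) : H :=
  ((NormedSpace.expSeries ℂ (H →L[ℂ] H)).sum ((-(Complex.I * s)) • T)) ξ

/-- Time-averaged `p`-moment `⟨⟨|X|^p⟩⟩_{t,ξ}` for a bounded operator `T`, with respect to the
orthonormal basis `B`, valued in `[0,∞]`. -/
def momentOp (T : H →L[ℂ] H) (B : HilbertBasis ℤ ℂ H) (p : ℝ) (ξ : H) (t : ℝ) : ℝ≥0∞ :=
  ENNReal.ofReal t⁻¹ *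
    ∫⁻ s in Set.Ioc (0 : ℝ) t,
      ∑' n : ℤ, ENNReal.ofReal (|(n : ℝ)| ^ p) *
        (‖(⟪evolveOp T s ξ, B n⟫_ℂ : ℂ)‖₊ : ℝ≥0∞) ^ 2

/-- Upper transport exponent `α_B^+(ξ,p)` for a bounded operator. -/
def alphaOp (T : H →L[ℂ] H) (B : HilbertBasis ℤ ℂ H) (p : ℝ) (ξ : H) : EReal :=
  limsup (fun t : ℝ => ENNReal.log (momentOp T B p ξ t) / (Real.log t : EReal)) atTop

open Classical in
/-- Pointwise upper scaling exponent `d_μ^+(x)`, valued in `[-∞,∞]` (with value `⊤` when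
`μ(B(x,ε)) = 0` for some `ε > 0`). -/
def dUpperPt (μ : Measure ℝ) (x : ℝ) : EReal :=
  if ∀ ε : ℝ, 0 < ε → 0 < μ (Metric.ball x ε) then
    limsup (fun ε : ℝ => ((Real.log (μ (Metric.ball x ε)).toReal / Real.log ε : ℝ) : EReal))
      (𝓝[>] 0)
  else ⊤

/-- Upper packing dimension `dim_P^+(μ) = μ-esssup d_μ^+`. -/
def packDimUpper (μ : Measure ℝ) : EReal := essSup (dUpperPt μ) μ

end


section Aux
open scoped ComplexConjugate

variable {H : Type*} [NormedAddCommGroup H] [InnerProductSpace ℂ H] [CompleteSpace H]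

omit [CompleteSpace H] in
private lemma stmt2_open (e : HilbertBasis ℤ ℂ H) (p : ℝ) (M : ℝ≥0∞) :
    IsOpen {ξ : H | M < ∑' n : ℤ,
      ENNReal.ofReal (|(n : ℝ)| ^ p) * (‖(⟪ξ, e n⟫_ℂ : ℂ)‖₊ : ℝ≥0∞) ^ 2} := by
  have h : LowerSemicontinuous fun ξ : H => ∑' n : ℤ,
      ENNReal.ofReal (|(n : ℝ)| ^ p) * (‖(⟪ξ, e n⟫_ℂ : ℂ)‖₊ : ℝ≥0∞) ^ 2 := by
    apply lowerSemicontinuous_tsum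
    intro n
    apply Continuous.lowerSemicontinuous
    have h1 : Continuous fun ξ : H => (⟪ξ, e n⟫_ℂ : ℂ) :=
      Continuous.inner continuous_id continuous_const
    have h2 : Continuous fun ξ : H => ((‖(⟪ξ, e n⟫_ℂ : ℂ)‖₊ : ℝ≥0∞)) ^ 2 := by
      simp only [← ENNReal.coe_pow]
      exact ENNReal.continuous_coe.comp ((continuous_nnnorm.comp h1).pow 2)
    exact (ENNReal.continuous_const_mul ENNReal.ofReal_ne_top).comp h2
  exact h.isOpen_preimage M

omit [CompleteSpace H] in
private lemma stmt2_dense (e : HilbertBasis ℤ ℂ H) {q : ℝ} (hq : 0 < q) (M : ℕ) :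
    Dense {ξ : H | (M : ℝ≥0∞) < ∑' n : ℤ,
      ENNReal.ofReal (|(n : ℝ)| ^ q) * (‖(⟪ξ, e n⟫_ℂ : ℂ)‖₊ : ℝ≥0∞) ^ 2} := by
  rw [Metric.dense_iff]
  intro ξ r hr
  have hsum : Summable fun n : ℤ => ‖e.repr ξ n‖ ^ (2 : ℕ) := by
    have := (lp.memℓp (e.repr ξ)).summable (p := 2) (by norm_num)
    have h2 : ((2 : ℝ≥0∞)).toReal = ((2:ℕ) : ℝ) := by norm_num
    simpa [h2, Real.rpow_natCast] using this
  have htend : Tendsto (fun n : ℤ => ‖e.repr ξ n‖ ^ (2 : ℕ)) cofinite (𝓝 0) :=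
    hsum.tendsto_cofinite_zero
  have h1 : {n : ℤ | ¬ ‖e.repr ξ n‖ ^ (2:ℕ) < (r / 4) ^ (2:ℕ)}.Finite :=
    Filter.eventually_cofinite.mp
      (htend.eventually (eventually_lt_nhds (show (0:ℝ) < (r/4)^(2:ℕ) by positivity)))
  set T : ℝ := ((M : ℝ) + 1) * (2 / r) ^ 2 with hT
  have hT0 : 0 ≤ T := by positivity
  set D : ℝ := T ^ (1 / q) with hD
  have h2 : {n : ℤ | |(n : ℝ)| ≤ D}.Finite := by
    apply Set.Finite.subset (Set.finite_Icc (-⌈D⌉) ⌈D⌉)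
    intro n hn
    simp only [Set.mem_setOf_eq] at hn
    have h1' : ((|n| : ℤ) : ℝ) ≤ D := by push_cast; exact hn
    have : |n| ≤ ⌈D⌉ := by exact_mod_cast h1'.trans (Int.le_ceil D)
    simp only [Set.mem_Icc, abs_le] at this ⊢
    omega
  obtain ⟨n, hn⟩ := ((h1.union h2).infinite_compl).nonempty
  simp only [Set.mem_compl_iff, Set.mem_union, Set.mem_setOf_eq, not_or, not_not, not_le] at hn
  obtain ⟨hnsmall, hnbig⟩ := hn
  have hre : ‖(⟪ξ, e n⟫_ℂ : ℂ)‖ = ‖e.repr ξ n‖ := by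
    rw [← inner_conj_symm, RCLike.norm_conj, ← e.repr_apply_apply]
  have hcoef : ‖(⟪ξ, e n⟫_ℂ : ℂ)‖ < r / 4 := by
    rw [hre]
    exact lt_of_pow_lt_pow_left₀ 2 (by positivity) hnsmall
  set c : ℂ := ((r / 2 : ℝ) : ℂ) - conj (⟪ξ, e n⟫_ℂ : ℂ) with hc
  refine ⟨ξ + c • e n, Metric.mem_ball.mpr ?_, ?_⟩
  · rw [dist_eq_norm, add_sub_cancel_left, norm_smul, e.orthonormal.1 n, mul_one]
    calc ‖c‖ ≤ ‖((r/2:ℝ):ℂ)‖ + ‖conj (⟪ξ, e n⟫_ℂ : ℂ)‖ := norm_sub_le _ _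
      _ = r/2 + ‖(⟪ξ, e n⟫_ℂ : ℂ)‖ := by
          rw [RCLike.norm_conj, Complex.norm_real, Real.norm_eq_abs,
            abs_of_pos (by positivity)]
      _ < r/2 + r/4 := by linarith
      _ < r := by linarith
  · simp only [Set.mem_setOf_eq]
    have hkey : (⟪ξ + c • e n, e n⟫_ℂ : ℂ) = ((r/2 : ℝ) : ℂ) := by
      rw [inner_add_left, inner_smul_left]
      have h11 : (⟪e n, e n⟫_ℂ : ℂ) = 1 := by
        have := (orthonormal_iff_ite.mp e.orthonormal) n n
        simpa using this
      have hcc : conj c = ((r/2:ℝ):ℂ) - (⟪ξ, e n⟫_ℂ : ℂ) := by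
        rw [hc, map_sub, Complex.conj_ofReal, Complex.conj_conj]
      rw [h11, mul_one, hcc]
      ring
    refine lt_of_lt_of_le ?_ (ENNReal.le_tsum n)
    rw [hkey]
    have hnn : ‖(((r/2:ℝ)):ℂ)‖ = r/2 := by
      rw [Complex.norm_real, Real.norm_eq_abs, abs_of_pos (by positivity)]
    have hnorm : (‖(((r/2:ℝ)):ℂ)‖₊ : ℝ≥0∞) ^ 2 = ENNReal.ofReal ((r/2)^2) := by
      rw [← ENNReal.ofReal_coe_nnreal, coe_nnnorm, ← ENNReal.ofReal_pow (norm_nonneg _), hnn]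
    rw [hnorm, ← ENNReal.ofReal_mul (by positivity)]
    have hMcast : (M : ℝ≥0∞) = ENNReal.ofReal (M : ℝ) := by simp
    rw [hMcast]
    have hD0 : 0 ≤ D := Real.rpow_nonneg hT0 _
    have hnpos : (0:ℝ) < |(n:ℝ)| := lt_of_le_of_lt hD0 hnbig
    refine (ENNReal.ofReal_lt_ofReal_iff
      (mul_pos (Real.rpow_pos_of_pos hnpos q) (by positivity))).mpr ?_
    have e2 : T < |(n:ℝ)| ^ q := by
      have h' : D ^ q < |(n:ℝ)| ^ q := Real.rpow_lt_rpow hD0 hnbig hq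
      have : D ^ q = T := by
        rw [hD, ← Real.rpow_mul hT0, one_div, inv_mul_cancel₀ hq.ne', Real.rpow_one]
      rw [← this]; exact h'
    have e1 : T * (r/2)^2 = (M:ℝ) + 1 := by
      rw [hT]; field_simp
    have e3 : T * (r/2)^2 < |(n:ℝ)|^q * (r/2)^2 :=
      mul_lt_mul_of_pos_right e2 (by positivity)
    linarith

omit [CompleteSpace H] in
private lemma stmt2_mono (e : HilbertBasis ℤ ℂ H) (ξ : H) {p q : ℝ} (hq : 0 < q) (hqp : q ≤ p) :
    (∑' n : ℤ, ENNReal.ofReal (|(n : ℝ)| ^ q) * (‖(⟪ξ, e n⟫_ℂ : ℂ)‖₊ : ℝ≥0∞) ^ 2) ≤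
      ∑' n : ℤ, ENNReal.ofReal (|(n : ℝ)| ^ p) * (‖(⟪ξ, e n⟫_ℂ : ℂ)‖₊ : ℝ≥0∞) ^ 2 := by
  refine ENNReal.tsum_le_tsum fun n => mul_le_mul_left (ENNReal.ofReal_le_ofReal ?_) _
  rcases eq_or_ne n 0 with rfl | hn
  · simp [Real.zero_rpow hq.ne', Real.zero_rpow (hq.trans_le hqp).ne']
  · have h1 : (1:ℝ) ≤ |(n:ℝ)| := by
      have : (1:ℤ) ≤ |n| := Int.one_le_abs hn
      calc (1:ℝ) = ((1:ℤ):ℝ) := by norm_num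
        _ ≤ ((|n|:ℤ):ℝ) := by exact_mod_cast this
        _ = |(n:ℝ)| := by push_cast; ring
    exact Real.rpow_le_rpow_of_exponent_le h1 hqp

end Aux

theorem stmt_2 {H : Type*} [NormedAddCommGroup H] [InnerProductSpace ℂ H] [CompleteSpace H]
    (e : HilbertBasis ℤ ℂ H) :
    Dense {ξ : H | ∀ p : ℝ, 0 < p →
        (∑' n : ℤ, ENNReal.ofReal (|(n : ℝ)| ^ p) * (‖(⟪ξ, e n⟫_ℂ : ℂ)‖₊ : ℝ≥0∞) ^ 2) = ∞} ∧
    IsGδ {ξ : H | ∀ p : ℝ, 0 < p →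
        (∑' n : ℤ, ENNReal.ofReal (|(n : ℝ)| ^ p) * (‖(⟪ξ, e n⟫_ℂ : ℂ)‖₊ : ℝ≥0∞) ^ 2) = ∞} := by
  have hq : ∀ k : ℕ, (0:ℝ) < 1 / ((k:ℝ) + 1) := fun k => by positivity
  have hset : {ξ : H | ∀ p : ℝ, 0 < p →
        (∑' n : ℤ, ENNReal.ofReal (|(n : ℝ)| ^ p) * (‖(⟪ξ, e n⟫_ℂ : ℂ)‖₊ : ℝ≥0∞) ^ 2) = ∞}
      = ⋂ km : ℕ × ℕ, {ξ : H | ((km.2 : ℝ≥0∞)) < ∑' n : ℤ,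
          ENNReal.ofReal (|(n : ℝ)| ^ (1 / ((km.1:ℝ) + 1))) *
            (‖(⟪ξ, e n⟫_ℂ : ℂ)‖₊ : ℝ≥0∞) ^ 2} := by
    ext ξ
    simp only [Set.mem_setOf_eq, Set.mem_iInter, Prod.forall]
    constructor
    · intro h k M
      rw [h _ (hq k)]
      exact ENNReal.natCast_lt_top M
    · intro h p hp
      obtain ⟨k, hk⟩ := exists_nat_one_div_lt hp
      have hinf : (∑' n : ℤ, ENNReal.ofReal (|(n : ℝ)| ^ (1 / ((k:ℝ) + 1))) *
          (‖(⟪ξ, e n⟫_ℂ : ℂ)‖₊ : ℝ≥0∞) ^ 2) = ∞ := by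
        by_contra hne
        obtain ⟨M, hM⟩ := ENNReal.exists_nat_gt hne
        exact absurd (h k M) (not_lt.mpr hM.le)
      exact top_le_iff.mp (hinf ▸ stmt2_mono e ξ (hq k) hk.le)
  rw [hset]
  constructor
  · exact dense_iInter_of_isOpen (fun km => stmt2_open e _ _)
      (fun km => stmt2_dense e (hq km.1) km.2)
  · exact .iInter fun km => (stmt2_open e _ _).isGδ
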